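/- Let G be a finite group, let π be an automorphism of the undirected reduced power graph RP(G), and let x, y be non-identity elements of G. Then ⟨y⟩ ⊊ ⟨x⟩ if and only if ⟨y^π⟩ ⊊ ⟨x^π⟩. -/

import Mathlib

open Subgroup Set

variable (G : Type*) [Group G]

/-- Arc of the directed reduced power graph `→RP(G)`: from `x` to `y` iff `⟨y⟩ ⊊ ⟨x⟩`. -/
def rpArc (x y : G) : Prop := zpowers y < zpowers x

/-- Adjacency in the undirected reduced power graph `RP(G)`:
`x` and `y` are adjacent iff `⟨x⟩ ⊊ ⟨y⟩` or `⟨y⟩ ⊊ ⟨x⟩`. -/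
def rpAdj (x y : G) : Prop := zpowers x < zpowers y ∨ zpowers y < zpowers x

/-- `x ≃ y` iff `x` and `y` have the same neighbourhood in `RP(G)`. -/
def simEq (x y : G) : Prop := ∀ z : G, rpAdj G x z ↔ rpAdj G y z

/-- The `≃`-class `x̂` of `x`. -/
def hatCls (x : G) : Set G := {y | simEq G y x}

/-- The `∼`-class `[x]` of `x`: the set of generators of `⟨x⟩`. -/
def genCls (x : G) : Set G := {y | zpowers y = zpowers x}

/-- The automorphism group of the directed reduced power graph `→RP(G)`,
as a subgroup of the permutations of `G`. -/
def DRPAut : Subgroup (Equiv.Perm G) where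
  carrier := {π | ∀ x y : G, rpArc G (π x) (π y) ↔ rpArc G x y}
  one_mem' := fun _ _ => Iff.rfl
  mul_mem' := by
    intro a b ha hb x y
    simp only [Equiv.Perm.mul_apply]
    exact (ha (b x) (b y)).trans (hb x y)
  inv_mem' := by
    intro a ha x y
    have h := ha (a⁻¹ x) (a⁻¹ y)
    simp only [Equiv.Perm.coe_inv, Equiv.apply_symm_apply] at h
    exact h.symm

/-- The automorphism group of the undirected reduced power graph `RP(G)`,
as a subgroup of the permutations of `G`. -/
def RPAut : Subgroup (Equiv.Perm G) where
  carrier := {π | ∀ x y : G, rpAdj G (π x) (π y) ↔ rpAdj G x y}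
  one_mem' := fun _ _ => Iff.rfl
  mul_mem' := by
    intro a b ha hb x y
    simp only [Equiv.Perm.mul_apply]
    exact (ha (b x) (b y)).trans (hb x y)
  inv_mem' := by
    intro a ha x y
    have h := ha (a⁻¹ x) (a⁻¹ y)
    simp only [Equiv.Perm.coe_inv, Equiv.apply_symm_apply] at h
    exact h.symm

/-- `⟨x⟩` is a maximal cyclic subgroup of `G`. -/
def IsMaxCyc (x : G) : Prop := ∀ y : G, zpowers x ≤ zpowers y → zpowers x = zpowers y

/-- The `≃`-class of `x` is of Type I: it is a single `∼`-class, `x̂ = [x]`. -/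
def TypeI (x : G) : Prop := hatCls G x = genCls G x

/-- The `≃`-class of `x` is of Type II: it is a union of `r ≥ 2` `∼`-classes whose
cyclic subgroups are distinct maximal cyclic subgroups of `G`, all of the same order. -/
def TypeII (x : G) : Prop :=
  (∃ y z : G, simEq G y x ∧ simEq G z x ∧ zpowers y ≠ zpowers z) ∧
  ∀ y : G, simEq G y x → IsMaxCyc G y ∧ orderOf y = orderOf x

/-- The `≃`-class of `x` is of Type III: `G` is non-cyclic, the class is a union of
`r ≥ 2` `∼`-classes whose cyclic subgroups are maximal cyclic subgroups of prime order,
and at least two distinct orders occur. -/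
def TypeIII (x : G) : Prop :=
  ¬ IsCyclic G ∧
  (∃ y z : G, simEq G y x ∧ simEq G z x ∧ orderOf y ≠ orderOf z) ∧
  ∀ y : G, simEq G y x → IsMaxCyc G y ∧ (orderOf y).Prime

/-- The `≃`-class of `x` is of Type IV with parameter `(p, q)`: it is a union of exactly
two `∼`-classes of elements of distinct prime orders `p` and `q`, the corresponding cyclic
subgroups being non-maximal when `G` is non-cyclic, and maximal when `G` is cyclic. -/
def TypeIV (x : G) (p q : ℕ) : Prop :=
  p.Prime ∧ q.Prime ∧ p ≠ q ∧
  (∃ x₁ x₂ : G, simEq G x₁ x ∧ simEq G x₂ x ∧ orderOf x₁ = p ∧ orderOf x₂ = q ∧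
     ∀ y : G, simEq G y x → zpowers y = zpowers x₁ ∨ zpowers y = zpowers x₂) ∧
  ((¬ IsCyclic G ∧ ∀ y : G, simEq G y x → ¬ IsMaxCyc G y) ∨
   (IsCyclic G ∧ ∀ y : G, simEq G y x → IsMaxCyc G y))

/-- A `P(G)`-permutation: a permutation `σ` of `G` preserving element orders, mapping each
`∼`-class `[x]` onto `[x^σ]`, and preserving inclusion and non-inclusion of cyclic subgroups. -/
def IsPPerm (σ : Equiv.Perm G) : Prop :=
  (∀ x : G, orderOf (σ x) = orderOf x) ∧
  (∀ x : G, σ '' genCls G x = genCls G (σ x)) ∧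
  (∀ x y : G, zpowers y ≤ zpowers x ↔ zpowers (σ y) ≤ zpowers (σ x))

/-- A permutation of `G` fixing every `≃`-class setwise. -/
def FixesClasses (τ : Equiv.Perm G) : Prop := ∀ x : G, simEq G (τ x) x

/-!
An automorphism `π` of `RP(G)` preserves adjacency, so it could only break `⟨y⟩ < ⟨x⟩` by
reversing the edge to `⟨π x⟩ < ⟨π y⟩`. Two invariants exclude this.

First, `π` permutes the `≃`-classes, preserving their sizes. The class of `a` contains the
`φ (orderOf a)` generators of `⟨a⟩`, and, since equivalent elements of different orders have prime
order, a class strictly below `⟨v⟩` consists either of generators of one subgroup or of elements of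
prime order of `⟨v⟩`.

Second, `π` preserves "the order of `a` is even and `> 2`", which says that `a` is adjacent to an
involution: inversion pairs off the elements of a class, so a class of odd size contains an
involution, while the class of the involution of `⟨π a⟩` has odd size.

Along a reversed edge the four orders are thus all even or all odd, and in either case comparing
class sizes with totients gives a contradiction.
-/

open scoped Nat

namespace Finset

theorem sum_le_prod_of_two_le {ι : Type*} {s : Finset ι} {f : ι → ℕ}
    (h : ∀ i ∈ s, 2 ≤ f i) : ∑ i ∈ s, f i ≤ ∏ i ∈ s, f i := by
  classical
  induction s using Finset.induction with
  | empty => simp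
  | insert a t ha ih =>
    rw [sum_insert ha, prod_insert ha]
    have hfa := h a (mem_insert_self a t)
    have ih := ih fun i hi => h i (mem_insert_of_mem hi)
    rcases t.eq_empty_or_nonempty with rfl | ⟨b, hb⟩
    · simp
    have : 2 ≤ ∏ i ∈ t, f i :=
      (h b (mem_insert_of_mem hb)).trans
        (single_le_prod' (fun i hi => (h i (mem_insert_of_mem hi)).trans' one_le_two) hb)
    nlinarith

theorem sum_lt_prod_of_two_le {ι : Type*} [DecidableEq ι] {s : Finset ι} {f : ι → ℕ}
    (h : ∀ i ∈ s, 2 ≤ f i) {i j : ι} (hi : i ∈ s) (hj : j ∈ s) (hij : i ≠ j) (hfj : 3 ≤ f j) :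
    ∑ i ∈ s, f i < ∏ i ∈ s, f i := by
  have h' : ∀ k ∈ s.erase j, 2 ≤ f k := fun k hk => h k (mem_of_mem_erase hk)
  have hprod : 2 ≤ ∏ k ∈ s.erase j, f k :=
    (h' i (mem_erase.2 ⟨hij, hi⟩)).trans
      (single_le_prod' (fun k hk => (h' k hk).trans' one_le_two) (mem_erase.2 ⟨hij, hi⟩))
  have hsum := sum_le_prod_of_two_le h'
  rw [← add_sum_erase s f hj, ← mul_prod_erase s f hj]
  nlinarith

end Finset

namespace Nat

theorem totient_le_totient_of_dvd {m n : ℕ} (h : m ∣ n) (hn : n ≠ 0) : φ m ≤ φ n :=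
  Nat.le_of_dvd (totient_pos.2 (Nat.pos_of_ne_zero hn)) (totient_dvd_of_dvd h)

/-- With `n = m * c`, the identity `φ (gcd m c) * φ (m * c) = φ m * φ c * gcd m c` forces first
`φ c = 1`, i.e. `c = 2`, and then `gcd m 2 = 1`. -/
theorem eq_two_mul_and_odd_of_totient_le {m n : ℕ} (hm : 0 < m) (hmn : m ∣ n) (hlt : m < n)
    (hφ : φ n ≤ φ m) : n = 2 * m ∧ Odd m := by
  obtain ⟨c, rfl⟩ := hmn
  have key := totient_gcd_mul_totient_mul m c
  have hφm : 0 < φ m := totient_pos.2 hm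
  have hc0 : 0 < c := Nat.pos_of_ne_zero (by rintro rfl; simp at hlt)
  have hφc : φ c = 1 := by
    have := totient_le (m.gcd c)
    have := totient_pos.2 hc0
    have : φ m * φ c * m.gcd c ≤ φ m * 1 * m.gcd c := by rw [← key]; nlinarith
    have := Nat.le_of_mul_le_mul_left
      (Nat.le_of_mul_le_mul_right this (Nat.gcd_pos_of_pos_left c hm)) hφm
    omega
  obtain rfl : c = 2 := by
    rcases totient_eq_one_iff.1 hφc with rfl | rfl
    · simp at hlt
    · rfl
  have hg : m.gcd 2 ≤ φ (m.gcd 2) := by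
    refine Nat.le_of_mul_le_mul_left ?_ hφm
    calc φ m * m.gcd 2 = φ (m.gcd 2) * φ (m * 2) := by rw [key, totient_two, mul_one]
      _ ≤ φ m * φ (m.gcd 2) := by rw [mul_comm]; exact Nat.mul_le_mul_right _ hφ
  have hcop : m.Coprime 2 := by
    by_contra hne
    have := Nat.gcd_pos_of_pos_left 2 hm
    have := totient_lt (m.gcd 2) (by unfold Coprime at hne; omega)
    omega
  exact ⟨mul_comm m 2, coprime_two_right.1 hcop⟩

open Finset in
/-- In a cyclic group of odd non-prime order there are fewer elements of prime order
than generators. -/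
theorem sum_totient_primeFactors_lt_totient {n : ℕ} (hodd : Odd n) (hn : ¬ n.Prime) :
    ∑ p ∈ n.primeFactors, φ p < φ n := by
  have hn0 : n ≠ 0 := by rintro rfl; simp at hodd
  have hφ : ∀ p ∈ n.primeFactors, φ p + 1 = p := fun p hp => by
    have := (prime_of_mem_primeFactors hp).two_le
    rw [totient_prime (prime_of_mem_primeFactors hp)]; omega
  have h3 : ∀ p ∈ n.primeFactors, 3 ≤ p := fun p hp => by
    have h2 := (prime_of_mem_primeFactors hp).two_le
    have : p ≠ 2 := by
      rintro rfl
      exact not_even_iff_odd.2 hodd (even_iff_two_dvd.2 (dvd_of_mem_primeFactors hp))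
    omega
  by_cases hpq : ∃ p ∈ n.primeFactors, ∃ q ∈ n.primeFactors, p < q
  · obtain ⟨p, hp, q, hq, hlt⟩ := hpq
    calc ∑ p ∈ n.primeFactors, φ p
        < ∏ p ∈ n.primeFactors, φ p :=
          sum_lt_prod_of_two_le (fun r hr => by have := hφ r hr; have := h3 r hr; omega)
            hp hq hlt.ne (by have := hφ q hq; have := h3 p hp; omega)
      _ = ∏ p ∈ n.primeFactors, (p - 1) :=
          prod_congr rfl fun p hp => totient_prime (prime_of_mem_primeFactors hp)
      _ ≤ φ n := by
          rw [totient_eq_div_primeFactors_mul n]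
          exact Nat.le_mul_of_pos_left _ (Nat.div_pos (Nat.le_of_dvd (Nat.pos_of_ne_zero hn0)
            (prod_primeFactors_dvd n)) (prod_pos fun p hp => pos_of_mem_primeFactors hp))
  · push Not at hpq
    rcases n.primeFactors.eq_empty_or_nonempty with h | ⟨p, hp⟩
    · rw [h, sum_empty]; exact totient_pos.2 (Nat.pos_of_ne_zero hn0)
    have hP : n.primeFactors = {p} :=
      eq_singleton_iff_unique_mem.2 ⟨hp, fun q hq => le_antisymm (hpq p hp q hq) (hpq q hq p hp)⟩
    have hpp := prime_of_mem_primeFactors hp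
    obtain ⟨k, rfl⟩ : ∃ k, n = p ^ (k + 2) := by
      have hn := eq_prime_pow_of_unique_prime_dvd hn0 fun {d} hd hdn =>
        mem_singleton.1 (hP ▸ mem_primeFactors.2 ⟨hd, hdn, hn0⟩)
      match n.primeFactorsList.length, hn with
      | 0, hn => simp [hn] at hp
      | 1, hn => exact absurd (hn ▸ (pow_one p).symm ▸ hpp) ‹¬ n.Prime›
      | k + 2, hn => exact ⟨k, hn⟩
    rw [hP, sum_singleton, totient_prime_pow_succ hpp, totient_prime hpp]
    have := h3 p hp
    exact lt_mul_left (by omega) (Nat.one_lt_pow (by omega) (by omega))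

theorem sub_totient_prime_pow_succ {p : ℕ} (hp : p.Prime) (k : ℕ) :
    p ^ (k + 1) - φ (p ^ (k + 1)) = p ^ k := by
  rw [totient_prime_pow_succ hp, pow_succ, Nat.mul_sub_one,
    Nat.sub_sub_self (Nat.le_mul_of_pos_right _ hp.pos)]

/-- For a prime power, `n - φ n = n / p`, which determines `n` unless it equals `1`. -/
theorem prime_of_sub_totient_eq {m n : ℕ} (hm : IsPrimePow m) (hn : IsPrimePow n) (hmn : m ≠ n)
    (h : m - φ m = n - φ n) : m.Prime := by
  obtain ⟨p, e, hp, he, rfl⟩ := (isPrimePow_nat_iff m).1 hm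
  obtain ⟨q, f, hq, hf, rfl⟩ := (isPrimePow_nat_iff n).1 hn
  obtain ⟨e, rfl⟩ := Nat.exists_eq_add_of_lt he
  obtain ⟨f, rfl⟩ := Nat.exists_eq_add_of_lt hf
  simp only [zero_add] at h hmn ⊢
  rw [sub_totient_prime_pow_succ hp, sub_totient_prime_pow_succ hq] at h
  match e, f, h with
  | 0, _, _ => simpa using hp
  | e + 1, 0, h => exact absurd h (Nat.one_lt_pow e.succ_ne_zero hp.one_lt).ne'
  | e + 1, f + 1, h =>
    obtain ⟨rfl, rfl⟩ := hp.pow_inj hq h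
    exact absurd rfl hmn

end Nat

theorem Set.Finite.even_ncard_of_involutive {α : Type*} {f : α → α} (hf : Function.Involutive f)
    {S : Set α} (hS : S.Finite) (hmaps : ∀ x ∈ S, f x ∈ S) (hfix : ∀ x ∈ S, f x ≠ x) :
    Even S.ncard := by
  classical
  have := hS.fintype
  let σ : Equiv.Perm S := (hf.toPerm f).subtypePerm fun x => ⟨fun h => hf x ▸ hmaps _ h, hmaps x⟩
  have hσ : σ ^ 2 = 1 := by
    ext x
    exact hf x
  have hsupp : σ.support = Finset.univ := by
    ext x
    simpa [σ, Subtype.ext_iff] using hfix x x.2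
  rw [← Nat.card_coe_set_eq, Nat.card_eq_fintype_card, ← Finset.card_univ, ← hsupp,
    even_iff_two_dvd]
  exact Equiv.Perm.two_dvd_card_support hσ

section CyclicSubgroups

variable {G}

theorem orderOf_eq_two_of_inv_eq {z : G} (hz : z ≠ 1) (h : z⁻¹ = z) : orderOf z = 2 :=
  orderOf_eq_prime (by rw [sq]; exact inv_eq_iff_mul_eq_one.1 h) hz

theorem ncard_zpowers (a : G) : (zpowers a : Set G).ncard = orderOf a := by
  rw [← Nat.card_coe_set_eq, SetLike.coe_sort_coe, Nat.card_zpowers]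

theorem zpowers_one_lt {a : G} (ha : a ≠ 1) : zpowers (1 : G) < zpowers a := by
  rwa [zpowers_one_eq_bot, bot_lt_iff_ne_bot, Ne, zpowers_eq_bot]

variable [Finite G]

theorem zpowers_lt_zpowers_iff {a b : G} :
    zpowers a < zpowers b ↔ a ∈ zpowers b ∧ orderOf a < orderOf b := by
  constructor
  · intro h
    have hmem : a ∈ zpowers b := zpowers_le.1 h.le
    refine ⟨hmem, lt_of_le_of_ne (Nat.le_of_dvd (orderOf_pos b) (orderOf_dvd_of_mem_zpowers hmem))
      fun heq => h.ne (eq_of_le_of_card_ge h.le ?_)⟩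
    rw [Nat.card_zpowers, Nat.card_zpowers, heq]
  · rintro ⟨hmem, hlt⟩
    refine lt_of_le_of_ne (zpowers_le.2 hmem) fun heq => hlt.ne ?_
    rw [← Nat.card_zpowers, heq, Nat.card_zpowers]

theorem zpowers_eq_zpowers_iff_of_finite {a b : G} :
    zpowers a = zpowers b ↔ a ∈ zpowers b ∧ orderOf a = orderOf b := by
  constructor
  · intro h
    exact ⟨h ▸ mem_zpowers a, by rw [← Nat.card_zpowers, h, Nat.card_zpowers]⟩
  · rintro ⟨hmem, heq⟩
    exact eq_of_le_of_card_ge (zpowers_le.2 hmem) (by rw [Nat.card_zpowers, Nat.card_zpowers, heq])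

theorem orderOf_dvd_of_zpowers_lt {a b : G} (h : zpowers a < zpowers b) : orderOf a ∣ orderOf b :=
  orderOf_dvd_of_mem_zpowers (zpowers_lt_zpowers_iff.1 h).1

theorem orderOf_lt_of_zpowers_lt {a b : G} (h : zpowers a < zpowers b) : orderOf a < orderOf b :=
  (zpowers_lt_zpowers_iff.1 h).2

theorem eq_one_of_zpowers_lt_of_prime {a b : G} (hb : (orderOf b).Prime)
    (h : zpowers a < zpowers b) : a = 1 := by
  rcases hb.eq_one_or_self_of_dvd _ (orderOf_dvd_of_zpowers_lt h) with h1 | h1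
  · exact orderOf_eq_one_iff.1 h1
  · exact absurd h1 (orderOf_lt_of_zpowers_lt h).ne

theorem two_lt_orderOf_of_zpowers_lt {a b : G} (ha : a ≠ 1) (h : zpowers a < zpowers b) :
    2 < orderOf b := by
  have := orderOf_lt_of_zpowers_lt h
  have := orderOf_pos a
  have := mt orderOf_eq_one_iff.1 ha
  omega

theorem even_and_two_lt_orderOf_of_zpowers_lt {a b : G} (h : zpowers a < zpowers b)
    (ha : Even (orderOf a) ∧ 2 < orderOf a) : Even (orderOf b) ∧ 2 < orderOf b :=
  ⟨even_iff_two_dvd.2 ((even_iff_two_dvd.1 ha.1).trans (orderOf_dvd_of_zpowers_lt h)),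
    ha.2.trans (orderOf_lt_of_zpowers_lt h)⟩

theorem zpowers_pow_lt_of_prime_dvd {a : G} {p : ℕ} (hp : p.Prime) (hpa : p ∣ orderOf a) :
    zpowers (a ^ p) < zpowers a := by
  refine zpowers_lt_zpowers_iff.2 ⟨pow_mem (mem_zpowers a) p, ?_⟩
  rw [orderOf_pow_of_dvd hp.ne_zero hpa]
  exact Nat.div_lt_self (orderOf_pos a) hp.one_lt

theorem exists_orderOf_eq_two_of_even {b : G} (heven : Even (orderOf b)) (h2 : 2 < orderOf b) :
    ∃ τ, orderOf τ = 2 ∧ zpowers τ < zpowers b := by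
  obtain ⟨c, hc⟩ := heven
  rw [← two_mul] at hc
  have hτ : orderOf (b ^ c) = 2 := by
    rw [orderOf_pow_of_dvd (by omega) ⟨2, by rw [hc, mul_comm]⟩, hc,
      Nat.mul_div_cancel 2 (by omega)]
  exact ⟨b ^ c, hτ, zpowers_lt_zpowers_iff.2 ⟨pow_mem (mem_zpowers b) c, hτ ▸ h2⟩⟩

theorem ncard_setOf_mem_zpowers_orderOf_eq (v : G) {d : ℕ} (hd : d ∣ orderOf v) :
    {z | z ∈ zpowers v ∧ orderOf z = d}.ncard = φ d := by
  classical
  have := Fintype.ofFinite (zpowers v)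
  rw [← IsCyclic.card_orderOf_eq_totient (α := zpowers v)
    (by rwa [Fintype.card_eq_nat_card, Nat.card_zpowers]), ← Set.ncard_coe_finset,
    Finset.coe_filter_univ, ← Set.ncard_image_of_injective _ Subtype.val_injective]
  congr 1
  ext z
  constructor
  · rintro ⟨hz, rfl⟩
    exact ⟨⟨z, hz⟩, orderOf_mk z hz, rfl⟩
  · rintro ⟨u, rfl, rfl⟩
    exact ⟨u.2, orderOf_coe u⟩

theorem ncard_le_sum_totient_of_subset_zpowers {v : G} {S : Set G} (hS : S ⊆ zpowers v)
    {D : Finset ℕ} (hD : ∀ z ∈ S, orderOf z ∈ D) : S.ncard ≤ ∑ d ∈ D, φ d := by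
  calc S.ncard ≤ (⋃ d ∈ D, {z | z ∈ zpowers v ∧ orderOf z = d}).ncard :=
        Set.ncard_le_ncard (fun z hz => Set.mem_biUnion (hD z hz) ⟨hS hz, rfl⟩) (Set.toFinite _)
    _ ≤ ∑ d ∈ D, {z | z ∈ zpowers v ∧ orderOf z = d}.ncard := D.set_ncard_biUnion_le _
    _ ≤ ∑ d ∈ D, φ d := Finset.sum_le_sum fun d _ => by
        by_cases hd : d ∣ orderOf v
        · exact (ncard_setOf_mem_zpowers_orderOf_eq v hd).le
        · have : {z | z ∈ zpowers v ∧ orderOf z = d} = ∅ :=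
            Set.eq_empty_of_forall_notMem fun z hz => hd (hz.2 ▸ orderOf_dvd_of_mem_zpowers hz.1)
          simp [this]

theorem eq_of_mem_zpowers_of_orderOf_eq_two {v z τ : G} (hz : z ∈ zpowers v)
    (hτ : τ ∈ zpowers v) (hz2 : orderOf z = 2) (hτ2 : orderOf τ = 2) : z = τ := by
  have hcard := ncard_setOf_mem_zpowers_orderOf_eq v (hτ2 ▸ orderOf_dvd_of_mem_zpowers hτ)
  rw [Nat.totient_two] at hcard
  exact ((Set.ncard_le_one (Set.toFinite _)).1 hcard.le) z ⟨hz, hz2⟩ τ ⟨hτ, hτ2⟩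

theorem ncard_setOf_zpowers_lt (a : G) :
    {z | zpowers z < zpowers a}.ncard = orderOf a - φ (orderOf a) := by
  have hsplit : {z | zpowers z < zpowers a} =
      (zpowers a : Set G) \ {z | z ∈ zpowers a ∧ orderOf z = orderOf a} := by
    ext z
    simp only [Set.mem_ofPred_eq, Set.mem_sdiff, SetLike.mem_coe, zpowers_lt_zpowers_iff]
    constructor
    · rintro ⟨hz, hlt⟩
      exact ⟨hz, fun h => hlt.ne h.2⟩
    · rintro ⟨hz, hne⟩
      exact ⟨hz, lt_of_le_of_ne (Nat.le_of_dvd (orderOf_pos a) (orderOf_dvd_of_mem_zpowers hz))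
        fun h => hne ⟨hz, h⟩⟩
  rw [hsplit, Set.ncard_sdiff (fun z hz => hz.1), ncard_zpowers,
    ncard_setOf_mem_zpowers_orderOf_eq a dvd_rfl]

/-- Two distinct primes `p, q ∣ orderOf a` would put `a ^ p` and `a ^ q`, hence `a`, into `H`. -/
theorem isPrimePow_orderOf_of_forall_zpowers_lt_mem {H : Subgroup G} {a : G} (ha : a ≠ 1)
    (haH : a ∉ H) (h : ∀ z, zpowers z < zpowers a → z ∈ H) : IsPrimePow (orderOf a) := by
  rw [isPrimePow_iff_unique_prime_dvd]
  obtain ⟨p, hp, hpa⟩ := Nat.exists_prime_and_dvd (mt orderOf_eq_one_iff.1 ha)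
  refine ⟨p, ⟨hp, hpa⟩, fun q ⟨hq, hqa⟩ => by_contra fun hqp => haH ?_⟩
  obtain ⟨u, v, huv⟩ := (Nat.isCoprime_iff_coprime.2 ((Nat.coprime_primes hp hq).2 (Ne.symm hqp)))
  have hmem : ∀ r : ℕ, r.Prime → r ∣ orderOf a → a ^ (r : ℤ) ∈ H := fun r hr hra => by
    rw [zpow_natCast]; exact h _ (zpowers_pow_lt_of_prime_dvd hr hra)
  have : a = (a ^ (p : ℤ)) ^ u * (a ^ (q : ℤ)) ^ v := by
    rw [← zpow_mul, ← zpow_mul, ← zpow_add, mul_comm, mul_comm (q : ℤ), huv, zpow_one]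
  rw [this]
  exact mul_mem (zpow_mem (hmem p hp hpa) u) (zpow_mem (hmem q hq hqa) v)

end CyclicSubgroups

def IsUniversal (x : G) : Prop := ∀ w, w ≠ x → rpAdj G x w

section ReducedPowerGraph

variable {G}

theorem rpAdj_comm {x y : G} : rpAdj G x y ↔ rpAdj G y x := Or.comm

theorem not_rpAdj_self (x : G) : ¬ rpAdj G x x := by simp [rpAdj]

theorem simEq.refl (a : G) : simEq G a a := fun _ => Iff.rfl

theorem simEq.symm {a b : G} (h : simEq G a b) : simEq G b a := fun z => (h z).symm

theorem simEq.trans {a b c : G} (h : simEq G a b) (h' : simEq G b c) : simEq G a c :=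
  fun z => (h z).trans (h' z)

theorem simEq.not_rpAdj {a b : G} (h : simEq G a b) : ¬ rpAdj G a b :=
  fun hab => not_rpAdj_self b ((h b).1 hab)

theorem simEq.zpowers_lt_iff {a b z : G} (h : simEq G a b) :
    zpowers z < zpowers a ↔ zpowers z < zpowers b := by
  suffices ∀ {a b}, simEq G a b → zpowers z < zpowers a → zpowers z < zpowers b from
    ⟨this h, this h.symm⟩
  intro a b h hz
  rcases (h z).1 (Or.inr hz) with hbz | hzb
  · exact absurd (Or.inr (hbz.trans hz)) h.not_rpAdj
  · exact hzb

theorem simEq.lt_zpowers_iff {a b z : G} (h : simEq G a b) :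
    zpowers a < zpowers z ↔ zpowers b < zpowers z := by
  suffices ∀ {a b}, simEq G a b → zpowers a < zpowers z → zpowers b < zpowers z from
    ⟨this h, this h.symm⟩
  intro a b h hz
  rcases (h z).1 (Or.inl hz) with hbz | hzb
  · exact hbz
  · exact absurd (Or.inl (hz.trans hzb)) h.not_rpAdj

theorem genCls_subset_hatCls (a : G) : genCls G a ⊆ hatCls G a := fun z hz w => by
  simp only [rpAdj, show zpowers z = zpowers a from hz]

theorem one_notMem_hatCls {a : G} (ha : a ≠ 1) : (1 : G) ∉ hatCls G a := fun h =>
  h.not_rpAdj (Or.inl (zpowers_one_lt ha))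

theorem inv_mem_hatCls {a z : G} (hz : z ∈ hatCls G a) : z⁻¹ ∈ hatCls G a :=
  simEq.trans (genCls_subset_hatCls z zpowers_inv) hz

section Finite

variable [Finite G]

theorem ncard_genCls (a : G) : (genCls G a).ncard = φ (orderOf a) := by
  rw [← ncard_setOf_mem_zpowers_orderOf_eq a dvd_rfl]
  congr 1
  ext z
  exact zpowers_eq_zpowers_iff_of_finite

theorem totient_le_ncard_hatCls (a : G) : φ (orderOf a) ≤ (hatCls G a).ncard :=
  ncard_genCls a ▸ Set.ncard_le_ncard (genCls_subset_hatCls a) (Set.toFinite _)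

/-- The common down-set of `a` and `b` forces their orders to be prime powers `p ^ (e + 1)` and
`q ^ (f + 1)` with `p ^ e = q ^ f`. -/
theorem simEq.orderOf_prime {a b : G} (h : simEq G a b) (ha : a ≠ 1) (hb : b ≠ 1)
    (hne : orderOf a ≠ orderOf b) : (orderOf a).Prime := by
  have hpp : ∀ {c d : G}, simEq G c d → c ≠ 1 → orderOf c ≠ orderOf d →
      IsPrimePow (orderOf c) := fun {c d} hcd hc hne => by
    refine isPrimePow_orderOf_of_forall_zpowers_lt_mem hc (H := zpowers d) (fun hmem => ?_)
      fun z hz => (zpowers_lt_zpowers_iff.1 (hcd.zpowers_lt_iff.1 hz)).1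
    refine hcd.not_rpAdj (Or.inl (lt_of_le_of_ne (zpowers_le.2 hmem) fun heq => hne ?_))
    rw [← Nat.card_zpowers, heq, Nat.card_zpowers]
  refine Nat.prime_of_sub_totient_eq (hpp h ha hne) (hpp h.symm hb (Ne.symm hne)) hne ?_
  rw [← ncard_setOf_zpowers_lt, ← ncard_setOf_zpowers_lt]
  congr 1
  ext z
  exact h.zpowers_lt_iff

theorem hatCls_subset_zpowers {a v : G} (hav : zpowers a < zpowers v) :
    hatCls G a ⊆ zpowers v := fun _ hz =>
  (zpowers_lt_zpowers_iff.1 (hz.lt_zpowers_iff.2 hav)).1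

theorem ncard_hatCls_le_totient {a v : G} (ha : a ≠ 1) (hav : zpowers a < zpowers v)
    (hna : ¬ (orderOf a).Prime) : (hatCls G a).ncard ≤ φ (orderOf a) := by
  simpa using ncard_le_sum_totient_of_subset_zpowers (hatCls_subset_zpowers hav) (D := {orderOf a})
    fun z hz => Finset.mem_singleton.2 <| by_contra fun hne =>
      hna (hz.symm.orderOf_prime ha (ne_of_mem_of_not_mem hz (one_notMem_hatCls ha)) (Ne.symm hne))

theorem ncard_hatCls_le_sum_totient_primeFactors {a v : G} (ha : a ≠ 1)
    (hav : zpowers a < zpowers v) (hpa : (orderOf a).Prime) :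
    (hatCls G a).ncard ≤ ∑ p ∈ (orderOf v).primeFactors, φ p := by
  refine ncard_le_sum_totient_of_subset_zpowers (hatCls_subset_zpowers hav) fun z hz => ?_
  have hz1 : z ≠ 1 := ne_of_mem_of_not_mem hz (one_notMem_hatCls ha)
  refine Nat.mem_primeFactors.2 ⟨?_, orderOf_dvd_of_mem_zpowers (hatCls_subset_zpowers hav hz),
    (orderOf_pos v).ne'⟩
  by_cases hza : orderOf z = orderOf a
  · exact hza ▸ hpa
  · exact hz.orderOf_prime hz1 ha hza

theorem ncard_hatCls_lt_totient_of_odd {a v : G} (ha : a ≠ 1) (hav : zpowers a < zpowers v)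
    (hodd : Odd (orderOf v)) : (hatCls G a).ncard < φ (orderOf v) := by
  have hdvd := orderOf_dvd_of_zpowers_lt hav
  have hlt := orderOf_lt_of_zpowers_lt hav
  by_cases hpa : (orderOf a).Prime
  · refine (ncard_hatCls_le_sum_totient_primeFactors ha hav hpa).trans_lt
      (Nat.sum_totient_primeFactors_lt_totient hodd fun hpv => ?_)
    rcases hpv.eq_one_or_self_of_dvd _ hdvd with h | h
    · exact ha (orderOf_eq_one_iff.1 h)
    · exact hlt.ne h
  · refine (ncard_hatCls_le_totient ha hav hpa).trans_lt (lt_of_not_ge fun hle => ?_)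
    obtain ⟨h2, -⟩ := Nat.eq_two_mul_and_odd_of_totient_le (orderOf_pos a) hdvd hlt hle
    exact Nat.not_even_iff_odd.2 hodd ⟨orderOf a, by omega⟩

/-- Inversion pairs off the elements of a `≃`-class; only `τ` itself is left unpaired. -/
theorem odd_ncard_hatCls_of_orderOf_eq_two {τ v : G} (hτ : orderOf τ = 2)
    (hτv : zpowers τ < zpowers v) : Odd (hatCls G τ).ncard := by
  have hτ1 : τ ≠ 1 := by rintro rfl; simp at hτ
  have hτinv : τ⁻¹ = τ := inv_eq_of_mul_eq_one_left (by rw [← sq, ← hτ, pow_orderOf_eq_one])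
  have heven : Even (hatCls G τ \ {τ}).ncard := by
    refine (Set.toFinite _).even_ncard_of_involutive inv_involutive
      (fun z hz => ⟨inv_mem_hatCls hz.1, fun h => hz.2 ?_⟩) fun z hz hzz => hz.2 ?_
    · rw [Set.mem_singleton_iff, ← hτinv, ← Set.mem_singleton_iff.1 h, inv_inv]
    · exact eq_of_mem_zpowers_of_orderOf_eq_two (hatCls_subset_zpowers hτv hz.1)
        (zpowers_lt_zpowers_iff.1 hτv).1
        (orderOf_eq_two_of_inv_eq (ne_of_mem_of_not_mem hz.1 (one_notMem_hatCls hτ1)) hzz) hτ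
  rw [← Set.ncard_sdiff_singleton_add_one (simEq.refl τ)]
  exact heven.add_one

theorem exists_orderOf_eq_two_of_odd_ncard_hatCls {a : G} (ha : a ≠ 1)
    (hodd : Odd (hatCls G a).ncard) : ∃ z ∈ hatCls G a, orderOf z = 2 := by
  by_contra! h
  exact Nat.not_even_iff_odd.2 hodd ((Set.toFinite _).even_ncard_of_involutive inv_involutive
    (fun _ hz => inv_mem_hatCls hz) fun z hz hzz =>
      h z hz (orderOf_eq_two_of_inv_eq (ne_of_mem_of_not_mem hz (one_notMem_hatCls ha)) hzz))

end Finite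

theorem IsUniversal.orderOf_eq_two {x : G} (h : IsUniversal G x) (hx : x ≠ 1) : orderOf x = 2 :=
  orderOf_eq_two_of_inv_eq hx (by_contra fun hne => by simpa [rpAdj, zpowers_inv] using h x⁻¹ hne)

theorem isUniversal_one : IsUniversal G (1 : G) := fun _ hw => Or.inl (zpowers_one_lt hw)

theorem IsUniversal.zpowers_lt [Finite G] {x w : G} (h : IsUniversal G x) (hx : x ≠ 1)
    (hw : w ≠ 1) (hwx : w ≠ x) : zpowers x < zpowers w :=
  (h w hwx).resolve_right fun hwx =>
    hw (eq_one_of_zpowers_lt_of_prime (h.orderOf_eq_two hx ▸ Nat.prime_two) hwx)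

theorem even_and_two_lt_orderOf_of_rpAdj [Finite G] {a z : G} (ha : a ≠ 1) (hz : orderOf z = 2)
    (h : rpAdj G a z) : Even (orderOf a) ∧ 2 < orderOf a := by
  rcases h with h | h
  · exact absurd (eq_one_of_zpowers_lt_of_prime (hz ▸ Nat.prime_two) h) ha
  · exact ⟨even_iff_two_dvd.2 (hz ▸ orderOf_dvd_of_zpowers_lt h), hz ▸ orderOf_lt_of_zpowers_lt h⟩

section Automorphism

variable {π : Equiv.Perm G}

theorem IsUniversal.apply (hπ : π ∈ RPAut G) {x : G} (h : IsUniversal G x) :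
    IsUniversal G (π x) := by
  intro w hw
  obtain ⟨u, rfl⟩ := π.surjective w
  exact (hπ x u).2 (h u fun hux => hw (hux ▸ rfl))

theorem isUniversal_of_apply_eq_one (hπ : π ∈ RPAut G) {x : G} (h : π x = 1) : IsUniversal G x := by
  simpa [← h] using (isUniversal_one (G := G)).apply ((RPAut G).inv_mem hπ)

theorem simEq_apply_iff (hπ : π ∈ RPAut G) {a b : G} : simEq G (π a) (π b) ↔ simEq G a b := by
  refine ⟨fun h z => (hπ a z).symm.trans ((h (π z)).trans (hπ b z)), fun h w => ?_⟩
  obtain ⟨z, rfl⟩ := π.surjective w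
  exact (hπ a z).trans ((h z).trans (hπ b z).symm)

theorem ncard_hatCls_apply (hπ : π ∈ RPAut G) (a : G) :
    (hatCls G (π a)).ncard = (hatCls G a).ncard := by
  have : hatCls G (π a) = π '' hatCls G a := by
    ext w
    obtain ⟨z, rfl⟩ := π.surjective w
    simp only [hatCls, Set.mem_ofPred_eq, π.injective.mem_set_image, simEq_apply_iff hπ]
  rw [this, Set.ncard_image_of_injective _ π.injective]

variable [Finite G]

/-- The involution `τ` of `⟨π a⟩` is pulled back to a vertex adjacent to `a` whose class has odd
size, hence contains an involution; a universal `π⁻¹ 1 ≠ 1` is such an involution itself. -/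
theorem even_and_two_lt_orderOf_of_apply (hπ : π ∈ RPAut G) {a : G}
    (h : Even (orderOf (π a)) ∧ 2 < orderOf (π a)) : Even (orderOf a) ∧ 2 < orderOf a := by
  have hπa : π a ≠ 1 := fun h1 => by simp [h1] at h
  have ha : a ≠ 1 := by
    rintro rfl
    have := (isUniversal_one.apply hπ).orderOf_eq_two hπa
    omega
  obtain ⟨z, hz, haz⟩ : ∃ z, orderOf z = 2 ∧ rpAdj G a z := by
    by_cases h1 : π 1 = 1
    · obtain ⟨τ, hτ, hτa⟩ := exists_orderOf_eq_two_of_even h.1 h.2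
      have hπv : π (π⁻¹ τ) = τ := π.apply_symm_apply τ
      have hv1 : π⁻¹ τ ≠ 1 := fun hv => by
        rw [hv, h1] at hπv
        rw [← hπv, orderOf_one] at hτ
        omega
      obtain ⟨z, hz, hz2⟩ := exists_orderOf_eq_two_of_odd_ncard_hatCls hv1
        (by rw [← ncard_hatCls_apply hπ, hπv]; exact odd_ncard_hatCls_of_orderOf_eq_two hτ hτa)
      have hav : rpAdj G a (π⁻¹ τ) := (hπ a _).1 (by rw [hπv]; exact Or.inr hτa)
      exact ⟨z, hz2, rpAdj_comm.1 ((hz a).2 (rpAdj_comm.1 hav))⟩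
    · have hπd : π (π⁻¹ 1) = 1 := π.apply_symm_apply 1
      have hd := isUniversal_of_apply_eq_one hπ hπd
      have hd1 : π⁻¹ 1 ≠ 1 := fun hd1 => h1 ((congrArg π hd1).symm.trans hπd)
      exact ⟨π⁻¹ 1, hd.orderOf_eq_two hd1, rpAdj_comm.1 (hd a fun had => hπa (by rw [had, hπd]))⟩
  exact even_and_two_lt_orderOf_of_rpAdj ha hz haz

theorem even_and_two_lt_orderOf_apply_iff (hπ : π ∈ RPAut G) (a : G) :
    Even (orderOf (π a)) ∧ 2 < orderOf (π a) ↔ Even (orderOf a) ∧ 2 < orderOf a := by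
  refine ⟨even_and_two_lt_orderOf_of_apply hπ, fun h => ?_⟩
  exact even_and_two_lt_orderOf_of_apply ((RPAut G).inv_mem hπ) (by simpa using h)

/-- Either all four orders are even and `> 2`, and then the classes of `y` and `π x` consist of
generators, or all four are odd, and then these classes are smaller than the totients of `x` and
`π y`; both contradict `|x̂| = |(π x)^|` and `|ŷ| = |(π y)^|`. -/
theorem not_zpowers_apply_lt_of_lt (hπ : π ∈ RPAut G) {x y : G} (hy : y ≠ 1) (hx' : π x ≠ 1)
    (hyx : zpowers y < zpowers x) : ¬ zpowers (π x) < zpowers (π y) := by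
  intro hrev
  have hI := even_and_two_lt_orderOf_apply_iff hπ
  have hx2 := two_lt_orderOf_of_zpowers_lt hy hyx
  have hy'2 := two_lt_orderOf_of_zpowers_lt hx' hrev
  have hcx := ncard_hatCls_apply hπ x
  have hcy := ncard_hatCls_apply hπ y
  have hφx := totient_le_ncard_hatCls x
  have hφy' := totient_le_ncard_hatCls (π y)
  by_cases hIx : Even (orderOf x) ∧ 2 < orderOf x
  · have hIy := (hI y).1 (even_and_two_lt_orderOf_of_zpowers_lt hrev ((hI x).2 hIx))
    have hnp : ∀ {a : G}, Even (orderOf a) ∧ 2 < orderOf a → ¬ (orderOf a).Prime :=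
      fun ⟨he, h2⟩ hp => by have := hp.even_iff.1 he; omega
    have h1 := ncard_hatCls_le_totient hx' hrev (hnp ((hI x).2 hIx))
    have h2 := ncard_hatCls_le_totient hy hyx (hnp hIy)
    have h3 := Nat.totient_le_totient_of_dvd (orderOf_dvd_of_zpowers_lt hrev) (orderOf_pos _).ne'
    obtain ⟨-, hodd⟩ := Nat.eq_two_mul_and_odd_of_totient_le (orderOf_pos y)
      (orderOf_dvd_of_zpowers_lt hyx) (orderOf_lt_of_zpowers_lt hyx) (by omega)
    exact Nat.not_even_iff_odd.2 hodd hIy.1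
  · have hoddx : Odd (orderOf x) := Nat.not_even_iff_odd.1 fun he => hIx ⟨he, hx2⟩
    have hoddy' : Odd (orderOf (π y)) := Nat.not_even_iff_odd.1 fun he =>
      hIx (even_and_two_lt_orderOf_of_zpowers_lt hyx ((hI y).1 ⟨he, hy'2⟩))
    have h1 := ncard_hatCls_lt_totient_of_odd hy hyx hoddx
    have h2 := ncard_hatCls_lt_totient_of_odd hx' hrev hoddy'
    omega

theorem zpowers_apply_lt_of_lt (hπ : π ∈ RPAut G) {x y : G} (hy : y ≠ 1)
    (hyx : zpowers y < zpowers x) : zpowers (π y) < zpowers (π x) := by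
  have hx' : π x ≠ 1 := fun h => by
    have hx : x ≠ 1 := by rintro rfl; simp at hyx
    have := (isUniversal_of_apply_eq_one hπ h).orderOf_eq_two hx
    exact hy (eq_one_of_zpowers_lt_of_prime (this ▸ Nat.prime_two) hyx)
  exact ((hπ x y).2 (Or.inr hyx)).resolve_left (not_zpowers_apply_lt_of_lt hπ hy hx' hyx)

end Automorphism

end ReducedPowerGraph

/-- automorphisms of the undirected reduced power graph preserve strict
inclusion of generated cyclic subgroups on non-identity elements:
`⟨y⟩ ⊊ ⟨x⟩ ↔ ⟨y^π⟩ ⊊ ⟨x^π⟩`. -/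
theorem aut_RP_preserves_ssubset {G : Type*} [Group G] [Fintype G]
    (π : Equiv.Perm G) (hπ : π ∈ RPAut G) (x y : G) (hx : x ≠ 1) (hy : y ≠ 1) :
    zpowers y < zpowers x ↔ zpowers (π y) < zpowers (π x) := by
  refine ⟨zpowers_apply_lt_of_lt hπ hy, fun h => ?_⟩
  by_cases hy' : π y = 1
  · exact (isUniversal_of_apply_eq_one hπ hy').zpowers_lt hy hx fun hxy => h.ne (hxy ▸ rfl)
  · simpa using zpowers_apply_lt_of_lt ((RPAut G).inv_mem hπ) hy' h
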